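/- arXiv:2308.05372 — 7 statements merged into one kernel-verified Lean document; each statement's English description precedes it below -/
import Mathlib

section
/- For integers m ≥ 0 and rationals p, r, s, the Fuss–Catalan numbers satisfy the convolution identity: the sum over k from 0 to m of A_k(p,r) · A_{m-k}(p,s) equals A_m(p, r+s). -/
open Polynomial

/-- The m-th `(p,r)`-Fuss–Catalan number: `A 0 = 1` and
`A m = (r/m!) * ∏_{i=1}^{m-1} (m*p + r - i)` for `m ≥ 1`. -/
def fussCatalan (p r : ℚ) : ℕ → ℚ
  | 0 => 1
  | (m + 1) =>
      r / (Nat.factorial (m + 1)) *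
        ∏ i ∈ Finset.range m, ((m + 1 : ℚ) * p + r - (i + 1))

/-- Rothe-type recurrence in the second parameter. -/
lemma fussCatalan_rec (p r : ℚ) (m : ℕ) :
    fussCatalan p r (m + 1)
      = fussCatalan p (r - 1) (m + 1) + fussCatalan p (r + p - 1) m := by
  cases m with
  | zero => simp [fussCatalan]
  | succ n =>
      have hf : ((n + 1).factorial : ℚ) ≠ 0 := by
        exact_mod_cast (Nat.factorial_ne_zero _)
      have h1 : ∏ i ∈ Finset.range (n + 1), ((n + 1 + 1 : ℚ) * p + r - (i + 1))
          = (∏ i ∈ Finset.range n, (((n : ℚ) + 2) * p + r - (i + 2)))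
              * (((n : ℚ) + 2) * p + r - 1) := by
        rw [Finset.prod_range_succ']
        congr 1
        · exact Finset.prod_congr rfl fun i _ => by push_cast; ring
        · ring
      have h2 : ∏ i ∈ Finset.range (n + 1), ((n + 1 + 1 : ℚ) * p + (r - 1) - (i + 1))
          = (∏ i ∈ Finset.range n, (((n : ℚ) + 2) * p + r - (i + 2)))
              * (((n : ℚ) + 2) * p + r - ((n : ℚ) + 2)) := by
        rw [Finset.prod_range_succ]
        congr 1
        · exact Finset.prod_congr rfl fun i _ => by ring
        · ring
      have h3 : ∏ i ∈ Finset.range n, ((n + 1 : ℚ) * p + (r + p - 1) - (i + 1))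
          = ∏ i ∈ Finset.range n, (((n : ℚ) + 2) * p + r - (i + 2)) :=
        Finset.prod_congr rfl fun i _ => by ring
      show r / ((n + 1 + 1).factorial : ℚ) * _ = (r - 1) / ((n + 1 + 1).factorial : ℚ) * _
          + (r + p - 1) / ((n + 1).factorial : ℚ) * _
      push_cast
      rw [h1, h2, h3, Nat.factorial_succ (n + 1)]
      push_cast
      field_simp
      ring

lemma fussCatalan_zero_left (p : ℚ) (m : ℕ) (hm : m ≠ 0) : fussCatalan p 0 m = 0 := by
  cases m with
  | zero => exact absurd rfl hm
  | succ n => simp [fussCatalan]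

/-- Polynomial (in `r`) version of the Fuss–Catalan numbers. -/
noncomputable def fcPoly (p : ℚ) : ℕ → ℚ[X]
  | 0 => 1
  | (m + 1) =>
      C (1 / (Nat.factorial (m + 1) : ℚ)) * X *
        ∏ i ∈ Finset.range m, (C ((m + 1 : ℚ) * p) + X - C ((i : ℚ) + 1))

lemma fcPoly_eval (p r : ℚ) (m : ℕ) : (fcPoly p m).eval r = fussCatalan p r m := by
  cases m with
  | zero => simp [fcPoly, fussCatalan]
  | succ n =>
      simp only [fcPoly, fussCatalan, eval_mul, eval_C, eval_X, eval_prod, eval_add, eval_sub]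
      rw [div_eq_mul_inv]
      ring

/-- Convolution identity for Fuss–Catalan numbers:
`∑_{k=0}^m A_k(p,r) A_{m-k}(p,s) = A_m(p, r+s)`. -/
theorem fussCatalan_convolution (p r s : ℚ) (m : ℕ) :
    ∑ k ∈ Finset.range (m + 1), fussCatalan p r k * fussCatalan p s (m - k)
      = fussCatalan p (r + s) m := by
  induction m generalizing r s with
  | zero => simp [fussCatalan]
  | succ m ih =>
      -- the difference of the two sides, as a polynomial in r
      set Q : ℚ[X] :=
        (∑ k ∈ Finset.range (m + 1 + 1), fcPoly p k * C (fussCatalan p s (m + 1 - k)))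
          - (fcPoly p (m + 1)).comp (X + C s) with hQ
      have hQeval : ∀ t : ℚ, Q.eval t
          = (∑ k ∈ Finset.range (m + 1 + 1),
              fussCatalan p t k * fussCatalan p s (m + 1 - k))
            - fussCatalan p (t + s) (m + 1) := by
        intro t
        simp [hQ, eval_finset_sum, eval_comp, fcPoly_eval]
      -- key step: the sum shifts when r decreases by 1
      have hstep : ∀ t : ℚ, Q.eval t = Q.eval (t - 1) := by
        intro t
        rw [hQeval, hQeval]
        have hsum : ∑ k ∈ Finset.range (m + 1 + 1),
              fussCatalan p t k * fussCatalan p s (m + 1 - k)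
            = (∑ k ∈ Finset.range (m + 1 + 1),
                fussCatalan p (t - 1) k * fussCatalan p s (m + 1 - k))
              + ∑ k ∈ Finset.range (m + 1),
                fussCatalan p (t + p - 1) k * fussCatalan p s (m - k) := by
          rw [Finset.sum_range_succ' (fun k =>
                fussCatalan p t k * fussCatalan p s (m + 1 - k)),
              Finset.sum_range_succ' (fun k =>
                fussCatalan p (t - 1) k * fussCatalan p s (m + 1 - k))]
          have : ∀ k ∈ Finset.range (m + 1),
              fussCatalan p t (k + 1) * fussCatalan p s (m + 1 - (k + 1))
              = fussCatalan p (t - 1) (k + 1) * fussCatalan p s (m + 1 - (k + 1))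
                + fussCatalan p (t + p - 1) k * fussCatalan p s (m - k) := by
            intro k _
            rw [fussCatalan_rec, Nat.succ_sub_succ]
            ring
          rw [Finset.sum_congr rfl this, Finset.sum_add_distrib]
          simp [fussCatalan]
          ring
        rw [hsum, ih (t + p - 1) s, fussCatalan_rec p (t + s) m]
        have e1 : t + p - 1 + s = t + s + p - 1 := by ring
        have e2 : t - 1 + s = t + s - 1 := by ring
        rw [e1, e2]
        ring
      -- Q vanishes at 0
      have h0 : Q.eval 0 = 0 := by
        rw [hQeval]
        have : ∑ k ∈ Finset.range (m + 1 + 1),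
            fussCatalan p 0 k * fussCatalan p s (m + 1 - k)
            = fussCatalan p s (m + 1) := by
          rw [Finset.sum_eq_single 0]
          · simp [fussCatalan]
          · intro k _ hk
            rw [fussCatalan_zero_left p k hk]; ring
          · intro h; exact absurd (Finset.mem_range.2 (Nat.succ_pos _)) h
        rw [this, zero_add, sub_self]
      -- hence Q vanishes at all negative integers
      have hneg : ∀ n : ℕ, Q.eval (-(n : ℚ)) = 0 := by
        intro n
        induction n with
        | zero => simpa using h0
        | succ n ihn =>
            have h := hstep (-(n : ℚ))
            rw [ihn] at h
            have e : -(n : ℚ) - 1 = -(((n : ℕ) : ℚ) + 1) := by ring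
            rw [e] at h
            push_cast
            linarith [h]
      -- infinitely many roots ⇒ Q = 0
      have hQ0 : Q = 0 := by
        apply Polynomial.eq_zero_of_infinite_isRoot
        apply Set.infinite_of_injective_forall_mem
          (f := fun n : ℕ => -(n : ℚ))
        · intro a b hab
          have : (a : ℚ) = b := by
            have := neg_injective hab
            exact_mod_cast this
          exact_mod_cast this
        · intro n
          exact hneg n
      have := hQeval r
      rw [hQ0] at this
      simp only [Polynomial.eval_zero] at this
      linarith [this]
end

section
/- Let p, r be rationals with r an integer r ≥ 1 (or more generally the r-th power interpreted via formal power series). Then B_{p,1}(z)^r = B_{p,r}(z) as formal power series, i.e., the coefficient of z^m in the r-th power of B_{p,1} equals A_m(p,r). -/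
/-- The generating function `B_{p,r}(z) = ∑_{m≥0} A_m(p,r) z^m` as a formal power
series over `ℚ`. -/
def fussCatalanGF (p r : ℚ) : PowerSeries ℚ :=
  PowerSeries.mk (fussCatalan p r)

/-!
The recurrence `A_{m+1}(p, r+1) = A_{m+1}(p, r) + A_m(p, p+r)` shows that the defect
`D_m(r) = ∑_{i+j=m} A_i(p,r) A_j(p,1) - A_m(p,r+1)` satisfies
`D_{m+1}(r+1) - D_{m+1}(r) = D_m(p+r)`.
By induction on `m`, `D_{m+1}` is then a polynomial in `r` of period `1` vanishing at `0`,
hence zero. So `B_{p,r} B_{p,1} = B_{p,r+1}` for every rational `r`, and the theorem follows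
by induction on `r` from `B_{p,0} = 1`.
-/

open Polynomial Finset

theorem Polynomial.eq_zero_of_eval_add_one_eq {R : Type*} [CommRing R] [IsDomain R] [CharZero R]
    {f : R[X]} (hf : ∀ s, f.eval (s + 1) = f.eval s) (h0 : f.eval 0 = 0) : f = 0 := by
  have hnat : ∀ n : ℕ, f.eval (n : R) = 0 := by
    intro n
    induction n with
    | zero => simpa using h0
    | succ n ih => rw [Nat.cast_succ, hf, ih]
  refine eq_zero_of_infinite_isRoot f (Set.Infinite.mono ?_ (Set.infinite_range_of_injective
    Nat.cast_injective))
  rintro _ ⟨n, rfl⟩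
  exact hnat n

noncomputable def fussCatalanPoly (p : ℚ) : ℕ → ℚ[X]
  | 0 => 1
  | m + 1 =>
      C ((m + 1).factorial : ℚ)⁻¹ * X *
        ∏ i ∈ range m, (X + C ((m + 1 : ℚ) * p - (i + 1)))

theorem eval_fussCatalanPoly (p r : ℚ) (m : ℕ) :
    (fussCatalanPoly p m).eval r = fussCatalan p r m := by
  cases m with
  | zero => simp [fussCatalanPoly, fussCatalan]
  | succ m =>
    simp only [fussCatalanPoly, fussCatalan, eval_mul, eval_C, eval_X, eval_prod, eval_add]
    rw [div_eq_inv_mul]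
    congr 1
    exact prod_congr rfl fun i _ => by ring

theorem fussCatalan_add_one_succ (p r : ℚ) (m : ℕ) :
    fussCatalan p (r + 1) (m + 1) = fussCatalan p r (m + 1) + fussCatalan p (p + r) m := by
  cases m with
  | zero => simp [fussCatalan]
  | succ n =>
    simp only [fussCatalan]
    -- After splitting off the first resp. last factor, all three products consist of the
    -- factors `(n + 2) p + r - 1 - i`, `i < n`, and what is left is a quadratic identity in `r`.
    rw [prod_range_succ', prod_range_succ]
    have factors_add_one :
        ∀ i ∈ range n, ((n + 1 : ℕ) + 1 : ℚ) * p + (r + 1) - ((i + 1 : ℕ) + 1)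
          = (n + 2) * p + r - 1 - i := fun i _ => by push_cast; ring
    have factors_self : ∀ i ∈ range n, ((n + 1 : ℕ) + 1 : ℚ) * p + r - (i + 1)
        = (n + 2) * p + r - 1 - i := fun i _ => by push_cast; ring
    have factors_add_p : ∀ i ∈ range n, ((n : ℕ) + 1 : ℚ) * p + (p + r) - (i + 1)
        = (n + 2) * p + r - 1 - i := fun i _ => by ring
    rw [prod_congr rfl factors_add_one, prod_congr rfl factors_self, prod_congr rfl factors_add_p]
    generalize ∏ i ∈ range n, ((n + 2 : ℚ) * p + r - 1 - i) = Q
    rw [Nat.factorial_succ (n + 1)]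
    push_cast
    field_simp
    ring

theorem sum_antidiagonal_fussCatalan_add_one (p r : ℚ) (m : ℕ) :
    ∑ x ∈ antidiagonal (m + 1), fussCatalan p (r + 1) x.1 * fussCatalan p 1 x.2
      = ∑ x ∈ antidiagonal (m + 1), fussCatalan p r x.1 * fussCatalan p 1 x.2
        + ∑ x ∈ antidiagonal m, fussCatalan p (p + r) x.1 * fussCatalan p 1 x.2 := by
  simp only [Nat.sum_antidiagonal_succ, fussCatalan_add_one_succ, add_mul, sum_add_distrib]
  simp only [fussCatalan]
  ring

theorem sum_antidiagonal_fussCatalan_mul (p r : ℚ) (m : ℕ) :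
    ∑ x ∈ antidiagonal m, fussCatalan p r x.1 * fussCatalan p 1 x.2
      = fussCatalan p (r + 1) m := by
  induction m generalizing r with
  | zero => simp [fussCatalan]
  | succ m ih =>
    set D : ℚ[X] :=
      ∑ x ∈ antidiagonal (m + 1), C (fussCatalan p 1 x.2) * fussCatalanPoly p x.1
        - (fussCatalanPoly p (m + 1)).comp (X + 1)
    have eval_D : ∀ s, D.eval s = ∑ x ∈ antidiagonal (m + 1), fussCatalan p s x.1
        * fussCatalan p 1 x.2 - fussCatalan p (s + 1) (m + 1) := by
      intro s
      simp [D, eval_finsetSum, eval_fussCatalanPoly, mul_comm]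
    have periodic : ∀ s, D.eval (s + 1) = D.eval s := by
      intro s
      rw [eval_D, eval_D, sum_antidiagonal_fussCatalan_add_one, ih,
        fussCatalan_add_one_succ p (s + 1), ← add_assoc]
      ring
    have root_zero : D.eval 0 = 0 := by
      simp [eval_D, Nat.sum_antidiagonal_succ, fussCatalan]
    have hD : D = 0 := eq_zero_of_eval_add_one_eq periodic root_zero
    rw [← sub_eq_zero, ← eval_D, hD, Polynomial.eval_zero]

theorem fussCatalanGF_zero (p : ℚ) : fussCatalanGF p 0 = 1 := by
  ext (_ | m) <;> simp [fussCatalanGF, PowerSeries.coeff_one, fussCatalan]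

theorem fussCatalanGF_mul_fussCatalanGF_one (p r : ℚ) :
    fussCatalanGF p r * fussCatalanGF p 1 = fussCatalanGF p (r + 1) := by
  ext m
  simp [fussCatalanGF, PowerSeries.coeff_mul, sum_antidiagonal_fussCatalan_mul]

theorem fussCatalanGF_pow_general (p : ℚ) (r : ℕ) :
    (fussCatalanGF p 1) ^ r = fussCatalanGF p (r : ℚ) := by
  induction r with
  | zero => simp [fussCatalanGF_zero]
  | succ r ih => rw [pow_succ, ih, fussCatalanGF_mul_fussCatalanGF_one, Nat.cast_succ]

/-- For an integer `r ≥ 1`, `B_{p,1}(z)^r = B_{p,r}(z)` as formal power series: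
the coefficient of `z^m` in the `r`-th power of `B_{p,1}` equals `A_m(p,r)`. -/
theorem fussCatalanGF_pow (p : ℚ) (r : ℕ) (hr : 1 ≤ r) :
    (fussCatalanGF p 1) ^ r = fussCatalanGF p (r : ℚ) :=
  fussCatalanGF_pow_general p r
end

section
/- For a positive integer d ≥ 2, the coefficients a_m = A_m(d,d) · r_0^{md}, where r_0^d = (d-1)^{d-1}/d^d, satisfy a_{m+1}/a_m → 1 as m → ∞, and in fact a_{m+1}/a_m = 1 - 3/(2m) + o(1/m); consequently the series ∑_{m≥0} a_m converges absolutely. -/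
/-!
Comparing factorials, `a_{m+1} / a_m` is the product over `i < d - 1` of
`(d-1)((m+1)d + 1 + i) / (d(m(d-1) + d + 1 + i)) = 1 - (d+1+i) / (d(d-1)m) + O(1/m²)`,
so `m (a_{m+1} / a_m - 1) → -∑ᵢ (d+1+i) / (d(d-1)) = -3/2`. The first two claims are
reformulations of this limit, and since `-3/2 < -1`, Raabe's test gives convergence.
-/

open Filter Asymptotics Topology Finset

section NatCastMulSubOne

variable {r : ℕ → ℝ} {L : ℝ}

theorem tendsto_one_of_tendsto_natCast_mul_sub_one
    (h : Tendsto (fun m : ℕ => (m : ℝ) * (r m - 1)) atTop (𝓝 L)) :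
    Tendsto r atTop (𝓝 1) := by
  have hsub : Tendsto (fun m : ℕ => (m : ℝ)⁻¹ * ((m : ℝ) * (r m - 1))) atTop (𝓝 (0 * L)) :=
    tendsto_inv_atTop_nhds_zero_nat.mul h
  rw [zero_mul] at hsub
  have hsub' : Tendsto (fun m : ℕ => r m - 1) atTop (𝓝 0) := by
    refine hsub.congr' ?_
    filter_upwards [eventually_ne_atTop 0] with m hm
    rw [inv_mul_cancel_left₀ (Nat.cast_ne_zero.mpr hm)]
  simpa using hsub'.add_const 1

theorem isLittleO_sub_one_add_div_of_tendsto_natCast_mul_sub_one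
    (h : Tendsto (fun m : ℕ => (m : ℝ) * (r m - 1)) atTop (𝓝 L)) :
    (fun m : ℕ => r m - (1 + L / m)) =o[atTop] (fun m : ℕ => 1 / (m : ℝ)) := by
  rw [isLittleO_iff_tendsto' (by filter_upwards [eventually_ne_atTop 0] with m hm; simp [hm])]
  have h0 : Tendsto (fun m : ℕ => (m : ℝ) * (r m - 1) - L) atTop (𝓝 0) := by
    simpa using h.sub_const L
  refine h0.congr' ?_
  filter_upwards [eventually_ne_atTop 0] with m hm
  have hm : (m : ℝ) ≠ 0 := Nat.cast_ne_zero.mpr hm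
  field_simp
  ring

theorem tendsto_natCast_mul_prod_sub_one {ι : Type*} (t : Finset ι) (f : ι → ℕ → ℝ) (c : ι → ℝ)
    (h : ∀ i ∈ t, Tendsto (fun m : ℕ => (m : ℝ) * (f i m - 1)) atTop (𝓝 (c i))) :
    Tendsto (fun m : ℕ => (m : ℝ) * (∏ i ∈ t, f i m - 1)) atTop (𝓝 (∑ i ∈ t, c i)) := by
  induction t using Finset.cons_induction with
  | empty => simp
  | cons j t hj ih =>
    rw [forall_mem_cons] at h
    have hprod : Tendsto (fun m : ℕ => ∏ i ∈ t, f i m) atTop (𝓝 1) :=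
      tendsto_one_of_tendsto_natCast_mul_sub_one (ih h.2)
    have hlim := (h.1.mul hprod).add (ih h.2)
    rw [mul_one, ← sum_cons hj] at hlim
    refine hlim.congr fun m => ?_
    rw [prod_cons]
    ring

end NatCastMulSubOne

theorem Real.add_one_rpow_mul_one_sub_div_le {p x : ℝ} (hp : 1 ≤ p) (hx : 0 < x) :
    (x + 1) ^ p * (1 - p / x) ≤ x ^ p := by
  have hx1 : 0 < x + 1 := by linarith
  have hbern := one_add_mul_self_le_rpow_one_add
    (show -1 ≤ -1 / (x + 1) by rw [neg_div, neg_le_neg_iff, div_le_one hx1]; linarith) hp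
  have hsplit : 1 + -1 / (x + 1) = x / (x + 1) := by field_simp; ring
  have hdiv : 1 - p / x ≤ 1 + p * (-1 / (x + 1)) := by
    have : p / (x + 1) ≤ p / x := div_le_div_of_nonneg_left (by linarith) hx (by linarith)
    rw [mul_div_assoc', mul_neg_one, neg_div]
    linarith
  calc (x + 1) ^ p * (1 - p / x) ≤ (x + 1) ^ p * (x / (x + 1)) ^ p := by
        gcongr
        exact hdiv.trans (hsplit ▸ hbern)
    _ = x ^ p := by
        rw [Real.div_rpow hx.le hx1.le, mul_div_cancel₀ _ (Real.rpow_pos_of_pos hx1 p).ne']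

theorem summable_of_eventually_mul_rpow_le {a : ℕ → ℝ} (ha : ∀ m, 0 ≤ a m) {p : ℝ} (hp : 1 < p)
    (h : ∀ᶠ m : ℕ in atTop, a (m + 1) * ((m : ℝ) + 1) ^ p ≤ a m * (m : ℝ) ^ p) :
    Summable a := by
  obtain ⟨N, hN⟩ := eventually_atTop.mp (h.and (eventually_gt_atTop 0))
  have hbound : ∀ m, N ≤ m → a m * (m : ℝ) ^ p ≤ a N * (N : ℝ) ^ p := by
    intro m hm
    induction m, hm using Nat.le_induction with
    | base => rfl
    | succ m hm ih => push_cast; exact (hN m hm).1.trans ih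
  refine summable_of_isBigO_nat (Real.summable_nat_rpow_inv.mpr hp)
    (IsBigO.of_bound (a N * N ^ p) ?_)
  filter_upwards [eventually_ge_atTop N] with m hm
  have hm0 : (0 : ℝ) < m := by exact_mod_cast (hN N le_rfl).2.trans_le hm
  have hpow : (0 : ℝ) < (m : ℝ) ^ p := Real.rpow_pos_of_pos hm0 p
  rw [Real.norm_of_nonneg (ha m), Real.norm_of_nonneg (inv_nonneg.mpr hpow.le), ← div_eq_mul_inv,
    le_div_iff₀ hpow]
  exact hbound m hm

/-- **Raabe's test**. -/
theorem summable_of_tendsto_natCast_mul_ratio_sub_one {a : ℕ → ℝ} (ha : ∀ m, 0 < a m) {L : ℝ}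
    (hL : L < -1) (h : Tendsto (fun m : ℕ => (m : ℝ) * (a (m + 1) / a m - 1)) atTop (𝓝 L)) :
    Summable a := by
  obtain ⟨p, hp, hLp⟩ : ∃ p, 1 < p ∧ L < -p := ⟨(1 - L) / 2, by linarith, by linarith⟩
  refine summable_of_eventually_mul_rpow_le (fun m => (ha m).le) hp ?_
  filter_upwards [h.eventually_lt_const hLp, eventually_gt_atTop 0] with m hlt hm
  have hm : (0 : ℝ) < m := Nat.cast_pos.mpr hm
  have hratio : a (m + 1) ≤ a m * (1 - p / m) := by
    have hlt' : a (m + 1) / a m - 1 < -p / m := by rw [lt_div_iff₀ hm]; linarith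
    rw [← div_le_iff₀' (ha m)]
    linarith [neg_div (m : ℝ) p]
  calc a (m + 1) * ((m : ℝ) + 1) ^ p ≤ a m * (1 - p / m) * ((m : ℝ) + 1) ^ p := by gcongr
    _ = a m * (((m : ℝ) + 1) ^ p * (1 - p / m)) := by ring
    _ ≤ a m * (m : ℝ) ^ p :=
      mul_le_mul_of_nonneg_left (Real.add_one_rpow_mul_one_sub_div_le hp.le hm) (ha m).le

namespace Nat

theorem add_add_choose_mul_ascFactorial_mul_ascFactorial (q r b c : ℕ) :
    (q + c + (r + b)).choose (r + b) * (r + 1).ascFactorial b * (q + 1).ascFactorial c =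
      (q + r).choose r * (q + r + 1).ascFactorial (b + c) := by
  refine Nat.eq_of_mul_eq_mul_right (mul_pos r.factorial_pos q.factorial_pos) ?_
  calc (q + c + (r + b)).choose (r + b) * (r + 1).ascFactorial b * (q + 1).ascFactorial c
        * (r ! * q !)
      = (q + c + (r + b)).choose (r + b) * (q ! * (q + 1).ascFactorial c)
          * (r ! * (r + 1).ascFactorial b) := by ring
    _ = (q + c + (r + b))! := by
      rw [factorial_mul_ascFactorial, factorial_mul_ascFactorial,
        add_choose_mul_factorial_mul_factorial]
    _ = (q + r)! * (q + r + 1).ascFactorial (b + c) := by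
      rw [factorial_mul_ascFactorial]; congr 1; ring
    _ = (q + r).choose r * (q + r + 1).ascFactorial (b + c) * (r ! * q !) := by
      rw [← add_choose_mul_factorial_mul_factorial q r]; ring

theorem choose_succ_mul_succ_mul_ascFactorial (k m : ℕ) :
    ((m + 2) * (k + 1)).choose (m + 1) * (m + 1) * (m * k + k + 2).ascFactorial k =
      ((m + 1) * (k + 1)).choose m * ((m + 2) * (k + 1))
        * ((m + 1) * (k + 1) + 1).ascFactorial k := by
  have h := add_add_choose_mul_ascFactorial_mul_ascFactorial (m * k + k + 1) m 1 k
  simp only [add_comm 1 k, ascFactorial_succ, ascFactorial_zero, add_zero, mul_one] at h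
  have e1 : m * k + k + 1 + k + (m + 1) = (m + 2) * (k + 1) := by ring
  have e2 : m * k + k + 1 + m = (m + 1) * (k + 1) := by ring
  have e3 : (m + 1) * (k + 1) + 1 + k = (m + 2) * (k + 1) := by ring
  rw [e1, e2, e3] at h
  rw [h]; ring

end Nat

noncomputable def fussCatalanTerm (d m : ℕ) : ℝ :=
  1 / ((m : ℝ) + 1) * (Nat.choose ((m + 1) * d) m) * (((d : ℝ) - 1) ^ (d - 1) / (d : ℝ) ^ d) ^ m

/-- The `i`-th factor of `a_{m+1} / a_m`, written in `k = d - 1` to avoid truncated subtraction. -/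
noncomputable def fussCatalanRatioFactor (k i m : ℕ) : ℝ :=
  k * (((m : ℝ) + 1) * (k + 1) + 1 + i) / ((k + 1) * (m * k + k + 2 + i))

theorem fussCatalanTerm_pos {d : ℕ} (hd : 1 ≤ d) (m : ℕ) : 0 < fussCatalanTerm d m := by
  have hchoose : 0 < ((m + 1) * d).choose m := Nat.choose_pos (by nlinarith)
  have hs : 0 < ((d : ℝ) - 1) ^ (d - 1) / (d : ℝ) ^ d := by
    rcases hd.eq_or_lt with rfl | hd
    · norm_num
    · have : (1 : ℝ) < d := by exact_mod_cast hd
      exact div_pos (pow_pos (by linarith) _) (by positivity)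
  unfold fussCatalanTerm
  positivity

theorem fussCatalanTerm_succ_div (k m : ℕ) :
    fussCatalanTerm (k + 1) (m + 1) / fussCatalanTerm (k + 1) m =
      ∏ i ∈ range k, fussCatalanRatioFactor k i m := by
  set X := ∏ i ∈ range k, (((m : ℝ) + 1) * (k + 1) + 1 + i)
  set Y := ∏ i ∈ range k, ((m : ℝ) * k + k + 2 + i)
  have hchoose : (((m + 2) * (k + 1)).choose (m + 1) : ℝ) * (m + 1) * Y =
      ((m + 1) * (k + 1)).choose m * ((m + 2) * (k + 1)) * X := by
    simpa [X, Y, Nat.ascFactorial_eq_prod_range] using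
      congrArg (Nat.cast : ℕ → ℝ) (Nat.choose_succ_mul_succ_mul_ascFactorial k m)
  have hY : Y ≠ 0 := prod_ne_zero_iff.mpr fun i _ => by positivity
  have hk : (k : ℝ) ^ k ≠ 0 := by
    rcases k.eq_zero_or_pos with rfl | hk
    · simp
    · exact pow_ne_zero _ (by exact_mod_cast hk.ne')
  have hC : (((m + 1) * (k + 1)).choose m : ℝ) ≠ 0 := by
    exact_mod_cast (Nat.choose_pos (by nlinarith)).ne'
  have hprod : ∏ i ∈ range k, fussCatalanRatioFactor k i m = k ^ k * X / ((k + 1) ^ k * Y) := by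
    simp only [fussCatalanRatioFactor, prod_div_distrib, prod_mul_distrib, prod_const, card_range,
      X, Y]
  rw [hprod]
  unfold fussCatalanTerm
  push_cast
  simp only [add_sub_cancel_right]
  field_simp
  have hs : (k : ℝ) ^ k / (k + 1) ^ (k + 1) * (k + 1) ^ (k + 1) = k ^ k := by field_simp
  generalize (k : ℝ) ^ k / (k + 1) ^ (k + 1) = s at hs ⊢
  rw [pow_succ]
  linear_combination (s ^ m * s * (k + 1) ^ k) * hchoose
    + ((m + 2) * (((m + 1) * (k + 1)).choose m : ℝ) * s ^ m * X) * hs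

theorem tendsto_natCast_mul_fussCatalanRatioFactor_sub_one {k : ℕ} (hk : 0 < k) (i : ℕ) :
    Tendsto (fun m : ℕ => (m : ℝ) * (fussCatalanRatioFactor k i m - 1)) atTop
      (𝓝 (-(k + 2 + i) / (k * (k + 1)))) := by
  have hk : (k : ℝ) ≠ 0 := by positivity
  have h := (tendsto_natCast_div_add_atTop (((k : ℝ) + 2 + i) / k)).const_mul
    (-(k + 2 + i) / (k * (k + 1)) : ℝ)
  rw [mul_one] at h
  refine h.congr fun m => ?_
  unfold fussCatalanRatioFactor
  field_simp
  ring

theorem sum_range_neg_add_div_mul_add_one {k : ℕ} (hk : 0 < k) :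
    ∑ i ∈ range k, (-(k + 2 + i) / (k * (k + 1)) : ℝ) = -3 / 2 := by
  have hgauss : (∑ i ∈ range k, (i : ℝ)) * 2 = k * (k - 1) := by
    have := congrArg (Nat.cast : ℕ → ℝ) (sum_range_id_mul_two k)
    push_cast [Nat.cast_sub hk] at this
    exact this
  have hk : (k : ℝ) ≠ 0 := by positivity
  rw [← sum_div, sum_neg_distrib, sum_add_distrib, sum_const, card_range, nsmul_eq_mul]
  field_simp
  linear_combination -hgauss

theorem tendsto_natCast_mul_fussCatalanTerm_ratio_sub_one {k : ℕ} (hk : 0 < k) :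
    Tendsto (fun m : ℕ =>
        (m : ℝ) * (fussCatalanTerm (k + 1) (m + 1) / fussCatalanTerm (k + 1) m - 1))
      atTop (𝓝 (-3 / 2)) := by
  simp only [fussCatalanTerm_succ_div]
  rw [← sum_range_neg_add_div_mul_add_one hk]
  exact tendsto_natCast_mul_prod_sub_one _ _ _
    fun i _ => tendsto_natCast_mul_fussCatalanRatioFactor_sub_one hk i

/-- For an integer `d ≥ 2`, set `a_m = A_m(d,d) · r_0^{md}` where
`A_m(d,d) = (1/(m+1))·C((m+1)d, m)` and `r_0^d = (d-1)^{d-1}/d^d`.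
Then `a_{m+1}/a_m → 1`, in fact `a_{m+1}/a_m = 1 - 3/(2m) + o(1/m)`,
and consequently `∑ a_m` converges absolutely. -/
theorem fussCatalan_ratio_asymptotics (d : ℕ) (hd : 2 ≤ d) (s : ℝ)
    (hs : s = ((d : ℝ) - 1) ^ (d - 1) / (d : ℝ) ^ d)
    (a : ℕ → ℝ)
    (ha : a = fun m : ℕ =>
      (1 / ((m : ℝ) + 1) * (Nat.choose ((m + 1) * d) m)) * s ^ m) :
    Tendsto (fun m : ℕ => a (m + 1) / a m) atTop (nhds 1) ∧
    (fun m : ℕ => a (m + 1) / a m - (1 - 3 / (2 * (m : ℝ))))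
      =o[atTop] (fun m : ℕ => 1 / (m : ℝ)) ∧
    Summable (fun m : ℕ => |a m|) := by
  obtain ⟨k, rfl⟩ : ∃ k, d = k + 1 := ⟨d - 1, by omega⟩
  obtain rfl : a = fussCatalanTerm (k + 1) := by subst hs ha; rfl
  have hpos : ∀ m, 0 < fussCatalanTerm (k + 1) m := fussCatalanTerm_pos (by omega)
  have hraabe := tendsto_natCast_mul_fussCatalanTerm_ratio_sub_one (show 0 < k by omega)
  refine ⟨tendsto_one_of_tendsto_natCast_mul_sub_one hraabe, ?_, ?_⟩
  · convert isLittleO_sub_one_add_div_of_tendsto_natCast_mul_sub_one hraabe using 3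
    ring
  · simpa only [abs_of_pos (hpos _)] using
      summable_of_tendsto_natCast_mul_ratio_sub_one hpos (by norm_num) hraabe
end

section
/- For a positive integer d, the formal logarithm of the generating function B_{d,1}(z) of the (d,1)-Fuss–Catalan numbers has coefficient of z^n equal to (1/(dn)) · binomial(dn, n) for every n ≥ 1; equivalently, ∑_{m=1}^{n} ((-1)^{m-1}/n) · binomial(dn, n-m) = (1/(dn)) · binomial(dn, n). -/
lemma alt_sum_choose (N j : ℕ) :
    ∑ k ∈ Finset.range (j+1), (-1:ℚ)^k * (Nat.choose (N+1) k)
      = (-1:ℚ)^j * Nat.choose N j := by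
  induction j with
  | zero => simp
  | succ j ih =>
    rw [Finset.sum_range_succ, ih, Nat.choose_succ_succ]
    push_cast
    ring

/-- For a positive integer `d`, the coefficient of `z^n` (for `n ≥ 1`) in the formal
logarithm of the `(d,1)`-Fuss–Catalan generating function `B_{d,1}` equals
`(1/(dn))·C(dn,n)`; equivalently, the combinatorial identity
`∑_{m=1}^{n} ((-1)^{m-1}/n)·C(dn, n-m) = (1/(dn))·C(dn, n)` holds. -/
theorem log_fussCatalanGF_coeff (d n : ℕ) (hd : 0 < d) (hn : 1 ≤ n) :
    ∑ m ∈ Finset.Icc 1 n,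
        ((-1 : ℚ) ^ (m - 1) / (n : ℚ)) * (Nat.choose (d * n) (n - m))
      = (1 / ((d : ℚ) * n)) * (Nat.choose (d * n) n) := by
  have hN : 1 ≤ d * n := Nat.one_le_iff_ne_zero.mpr (by positivity)
  set N := d * n with hNdef
  -- reindex: m ↦ n - m
  have step1 : ∑ m ∈ Finset.Icc 1 n,
        ((-1 : ℚ) ^ (m - 1) / (n : ℚ)) * (Nat.choose N (n - m))
      = ∑ k ∈ Finset.range n, ((-1:ℚ)^(n-1-k) * Nat.choose N k) / n := by
    apply Finset.sum_nbij' (fun m => n - m) (fun k => n - k)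
    · intro m hm; simp only [Finset.mem_Icc] at hm; simp only [Finset.mem_range]; omega
    · intro k hk; simp only [Finset.mem_range] at hk; simp only [Finset.mem_Icc]; omega
    · intro m hm; simp only [Finset.mem_Icc] at hm; omega
    · intro k hk; simp only [Finset.mem_range] at hk; omega
    · intro m hm
      simp only [Finset.mem_Icc] at hm
      have : n - 1 - (n - m) = m - 1 := by omega
      rw [this]
      ring
  rw [step1]
  have step2 : ∀ k ∈ Finset.range n,
      ((-1:ℚ)^(n-1-k) * Nat.choose N k) / n
        = ((-1:ℚ)^(n-1) / n) * ((-1:ℚ)^k * Nat.choose N k) := by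
    intro k hk
    simp only [Finset.mem_range] at hk
    have h2 : ((-1:ℚ))^(n-1-k) = (-1:ℚ)^(n-1) * (-1)^k := by
      rw [← pow_add, show n-1+k = (n-1-k)+2*k from by omega, pow_add, pow_mul]
      simp
    rw [h2]; ring
  rw [Finset.sum_congr rfl step2, ← Finset.mul_sum]
  have hrange : n = (n-1) + 1 := by omega
  have hNrw : N = (N-1) + 1 := by omega
  have key : ∑ k ∈ Finset.range n, (-1:ℚ)^k * Nat.choose N k
      = (-1:ℚ)^(n-1) * Nat.choose (N-1) (n-1) := by
    rw [hrange, hNrw]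
    exact alt_sum_choose (N-1) (n-1)
  rw [key]
  have hchoose : N * Nat.choose (N-1) (n-1) = Nat.choose N n * n := by
    have h := Nat.add_one_mul_choose_eq (N-1) (n-1)
    rw [show N-1+1 = N from by omega, show n-1+1 = n from by omega] at h
    exact h
  have hchooseQ : (N:ℚ) * Nat.choose (N-1) (n-1) = Nat.choose N n * n := by
    exact_mod_cast congrArg (Nat.cast : ℕ → ℚ) hchoose
  have hn0 : (n:ℚ) ≠ 0 := by positivity
  have hN0 : (N:ℚ) ≠ 0 := by
    have : 0 < N := hN
    positivity
  have hsq : ((-1:ℚ)^(n-1))^2 = 1 := by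
    rw [← pow_mul, mul_comm, pow_mul]; simp
  have hdn : ((d:ℚ) * n) = (N:ℚ) := by rw [hNdef]; push_cast; ring
  rw [hdn]
  field_simp
  linear_combination ((Nat.choose (N-1) (n-1) : ℚ) * (N:ℚ)) * hsq + hchooseQ
end

section
/- Let N be a positive integer and 𝕌_N the set of N-th roots of unity in ℂ. Then the sum over all N-tuples (η_1, …, η_N) in 𝕌_N^N of det[η_j^{j-i}]_{i,j=1}^N equals N^N. -/
open Complex

/-- Summing `det[η_j^{j-i}]_{i,j=1}^N` over all `N`-tuples `(η_1, …, η_N)` of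
`N`-th roots of unity (each `η_j = e^{2πi·f(j)/N}` ranging independently over all
`N`-th roots of unity) gives `N^N`. -/
theorem sum_det_rootsOfUnity (N : ℕ) (hN : 0 < N) :
    ∑ f : Fin N → Fin N,
        Matrix.det (Matrix.of fun i j : Fin N =>
          (Complex.exp (2 * Real.pi * Complex.I * (f j : ℕ) / N)) ^ ((j : ℤ) - (i : ℤ)))
      = (N : ℂ) ^ N := by
  set ζ : ℂ := Complex.exp (2 * Real.pi * Complex.I / N) with hζdef
  have hζ : IsPrimitiveRoot ζ N := Complex.isPrimitiveRoot_exp N hN.ne'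
  have hentry : ∀ (k : Fin N) (i j : Fin N),
      (Complex.exp (2 * Real.pi * Complex.I * (k : ℕ) / N)) ^ ((j : ℤ) - (i : ℤ))
        = ζ ^ ((k : ℤ) * ((j : ℤ) - (i : ℤ))) := by
    intro k i j
    have h1 : Complex.exp (2 * Real.pi * Complex.I * (k : ℕ) / N) = ζ ^ (k : ℕ) := by
      rw [hζdef, ← Complex.exp_nat_mul]
      ring_nf
    rw [h1, ← zpow_natCast, ← zpow_mul]
  -- the sum over each column entry
  have hsum : ∀ i j : Fin N,
      (∑ k : Fin N, ζ ^ ((k : ℤ) * ((j : ℤ) - (i : ℤ))))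
        = (N : ℂ) * (1 : Matrix (Fin N) (Fin N) ℂ) j i := by
    intro i j
    by_cases hij : j = i
    · subst hij
      simp [Matrix.one_apply]
    · have hm : ((j : ℤ) - (i : ℤ)) ≠ 0 := by
        intro h
        exact hij (Fin.ext (by omega))
      have hne1 : ζ ^ ((j : ℤ) - (i : ℤ)) ≠ 1 := by
        rw [Ne, hζ.zpow_eq_one_iff_dvd]
        intro hdvd
        have h1 : (N : ℤ) ∣ |(j : ℤ) - (i : ℤ)| := (dvd_abs _ _).mpr hdvd
        have h2 : (N : ℤ) ≤ |(j : ℤ) - (i : ℤ)| := Int.le_of_dvd (abs_pos.mpr hm) h1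
        have hj := j.isLt
        have hi := i.isLt
        rcases abs_cases ((j : ℤ) - (i : ℤ)) with ⟨he, _⟩ | ⟨he, _⟩ <;> omega
      have hpow : (ζ ^ ((j : ℤ) - (i : ℤ))) ^ N = 1 := by
        have : (ζ ^ ((j : ℤ) - (i : ℤ))) ^ (N : ℤ) = (ζ ^ (N : ℤ)) ^ ((j : ℤ) - (i : ℤ)) := by
          rw [← zpow_mul, ← zpow_mul, mul_comm]
        rw [← zpow_natCast (ζ ^ ((j : ℤ) - (i : ℤ))) N, this]
        have : ζ ^ (N : ℤ) = 1 := by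
          rw [zpow_natCast]; exact hζ.pow_eq_one
        rw [this, one_zpow]
      have : ∑ k : Fin N, ζ ^ ((k : ℤ) * ((j : ℤ) - (i : ℤ)))
          = ∑ k ∈ Finset.range N, (ζ ^ ((j : ℤ) - (i : ℤ))) ^ k := by
        rw [← Fin.sum_univ_eq_sum_range (fun k => (ζ ^ ((j : ℤ) - (i : ℤ))) ^ k) N]
        refine Finset.sum_congr rfl fun k _ => ?_
        rw [mul_comm, zpow_mul, zpow_natCast]
      rw [this, geom_sum_eq hne1, hpow, sub_self, zero_div, Matrix.one_apply_ne hij]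
      ring
  calc
    ∑ f : Fin N → Fin N,
        Matrix.det (Matrix.of fun i j : Fin N =>
          (Complex.exp (2 * Real.pi * Complex.I * (f j : ℕ) / N)) ^ ((j : ℤ) - (i : ℤ)))
      = ∑ f : Fin N → Fin N,
          Matrix.detRowAlternating
            (fun j i : Fin N => ζ ^ ((f j : ℤ) * ((j : ℤ) - (i : ℤ)))) := by
        refine Finset.sum_congr rfl fun f _ => ?_
        rw [← Matrix.det_transpose]
        congr 1
        ext j i
        simp only [Matrix.transpose_apply, Matrix.of_apply]
        exact hentry (f j) i j
    _ = Matrix.detRowAlternating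
          (fun j i : Fin N => ∑ k : Fin N, ζ ^ ((k : ℤ) * ((j : ℤ) - (i : ℤ)))) := by
        have hms := MultilinearMap.map_sum
          (Matrix.detRowAlternating (R := ℂ) (n := Fin N)).toMultilinearMap
          (g := fun (j : Fin N) (k : Fin N) =>
            fun i : Fin N => ζ ^ ((k : ℤ) * ((j : ℤ) - (i : ℤ))))
        have hfun : (fun j : Fin N => ∑ k : Fin N,
              (fun i : Fin N => ζ ^ ((k : ℤ) * ((j : ℤ) - (i : ℤ)))))
            = fun j i : Fin N => ∑ k : Fin N, ζ ^ ((k : ℤ) * ((j : ℤ) - (i : ℤ))) := by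
          funext j i
          simp
        rw [hfun] at hms
        exact hms.symm
    _ = Matrix.det ((N : ℂ) • (1 : Matrix (Fin N) (Fin N) ℂ)) := by
        congr 1
        ext j i
        exact hsum i j
    _ = (N : ℂ) ^ N := by
        rw [Matrix.det_smul, Matrix.det_one, Fintype.card_fin, mul_one]
end

section
/- Fix N ≥ 1 complex numbers λ_1, …, λ_N (all nonzero, all ≠ 1) satisfying the deformed Bethe equation λ_j^L (1 - λ_j^{-1})^N = z^L for a fixed nonzero complex z and positive integers N ≤ L. Then summing the determinant det[(1-λ_j^{-1})^{-i} λ_j^{-x_i}]_{i,j=1}^N over all configurations X = (x_1 < x_2 < ⋯ < x_N) with 0 ≤ x_1 < ⋯ < x_N ≤ L-1 yields (1 + (-1)^N z^{-L} ∏_{i=1}^N (1 - λ_i^{-1})) · det[(1-λ_j^{-1})^{-i-1}]_{i,j=1}^N. -/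
/-!
Write `μⱼ = λⱼ⁻¹` and `bⱼ = 1 - μⱼ`, so that the `(i, j)` entry is `bⱼ^(-i-1) μⱼ^(xᵢ)`.
Since `b^(-i-1) μ^a = b^(-i-2) μ^a - b^(-i-2) μ^(a+1)`, summing row `0` over `x₀ < x₁`
telescopes to `b^(-2) - b^(-2) μ^(x₁)`, and the second term is row `1`, so it drops out of the
determinant. Repeating this for the rows `1, …, N-2` turns row `i` into `b^(-i-2)`, and summing
the last row over `x_{N-1} < L` gives `b^(-N-1) - b^(-N-1) μ^L = b^(-N-1) - z^(-L) b⁻¹` by the Bethe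
equation. Moving the row `b⁻¹` to the top produces the matrix `[b^(-i-2)] · diag(b)`, whence the
factor `(-1)^(N-1) ∏ b`.
-/

open Finset

def increasingTuples (n t : ℕ) : Finset (Fin n → ℕ) :=
  {f ∈ Fintype.piFinset fun _ => range t | StrictMono f}

section increasingTuples

variable {M : Type*} [AddCommMonoid M]

theorem mem_increasingTuples {n t : ℕ} {f : Fin n → ℕ} :
    f ∈ increasingTuples n t ↔ StrictMono f ∧ ∀ i, f i < t := by
  simp [increasingTuples, and_comm]

theorem sum_increasingTuples_one (t : ℕ) (F : (Fin 1 → ℕ) → M) :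
    ∑ f ∈ increasingTuples 1 t, F f = ∑ a ∈ range t, F (fun _ => a) := by
  refine sum_nbij' (fun f => f 0) (fun a _ => a) (fun f hf => ?_) (fun a ha => ?_)
    (fun f _ => ?_) (fun a _ => rfl) (fun f _ => ?_)
  · simpa using (mem_increasingTuples.1 hf).2 0
  · simpa [mem_increasingTuples, Subsingleton.strictMono] using ha
  · funext i; rw [Subsingleton.elim i 0]
  · congr; funext i; rw [Subsingleton.elim i 0]

theorem sum_increasingTuples_succ_succ (n t : ℕ) (F : (Fin (n + 2) → ℕ) → M) :
    ∑ f ∈ increasingTuples (n + 2) t, F f =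
      ∑ g ∈ increasingTuples (n + 1) t, ∑ a ∈ range (g 0), F (Fin.cons a g) := by
  rw [sum_sigma']
  refine sum_bij' (fun f _ => ⟨Fin.tail f, f 0⟩) (fun p _ => Fin.cons p.2 p.1)
    (fun f hf => ?_) (fun p hp => ?_) (fun f _ => Fin.cons_self_tail f)
    (fun p _ => by simp) (fun f _ => by rw [Fin.cons_self_tail])
  · obtain ⟨hmono, hlt⟩ := mem_increasingTuples.1 hf
    simp only [mem_sigma, mem_increasingTuples, mem_range, Fin.tail]
    exact ⟨⟨hmono.comp Fin.strictMono_succ, fun i => hlt _⟩, hmono (Fin.succ_pos 0)⟩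
  · simp only [mem_sigma, mem_increasingTuples, mem_range] at hp
    obtain ⟨⟨hmono, hlt⟩, ha⟩ := hp
    refine mem_increasingTuples.2 ⟨Fin.strictMono_cons.2 ⟨fun j => ?_, hmono⟩, fun i => ?_⟩
    · exact ha.trans_le (hmono.monotone (Fin.zero_le j))
    · refine Fin.cases ?_ (fun j => ?_) i
      · simpa using ha.trans (hlt 0)
      · simpa using hlt j

theorem sum_strictMono_fin_eq_sum_increasingTuples (n t : ℕ) (F : (Fin n → ℕ) → M) :
    ∑ x : {f : Fin n → Fin t // StrictMono f}, F (fun i => x.1 i) =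
      ∑ f ∈ increasingTuples n t, F f := by
  refine sum_bij' (fun x _ => fun i => x.1 i)
    (fun f hf => ⟨fun i => ⟨f i, (mem_increasingTuples.1 hf).2 i⟩,
      fun i j hij => (mem_increasingTuples.1 hf).1 hij⟩)
    (fun x _ => mem_increasingTuples.2 ⟨fun i j hij => x.2 hij, fun i => (x.1 i).2⟩)
    (fun _ _ => mem_univ _) (fun _ _ => rfl) (fun _ _ => rfl) (fun _ _ => rfl)

end increasingTuples

namespace AlternatingMap

variable {R M N : Type*} [CommRing R] [AddCommGroup M] [Module R M] [AddCommGroup N] [Module R N]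

theorem sum_increasingTuples_of_eq_sub_succ (v : ℕ → ℕ → M)
    (hv : ∀ i a, v i a = v (i + 1) a - v (i + 1) (a + 1)) (n t : ℕ)
    (D : M [⋀^Fin (n + 1)]→ₗ[R] N) :
    ∑ x ∈ increasingTuples (n + 1) t, D (fun k => v k (x k)) =
      D (Function.update (fun k => v (k + 1) 0) (Fin.last n) (v (n + 1) 0 - v (n + 1) t)) := by
  have telescope : ∀ i s, ∑ a ∈ range s, v i a = v (i + 1) 0 - v (i + 1) s := fun i s => by
    simp only [hv i, sum_range_sub']
  induction n generalizing v with
  | zero =>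
    rw [sum_increasingTuples_one, ← telescope, map_update_sum]
    refine sum_congr rfl fun a _ => congr_arg D (funext fun k => ?_)
    fin_cases k
    simp
  | succ n ih =>
    have row_cons : ∀ (a : ℕ) (g : Fin (n + 1) → ℕ),
        (fun k : Fin (n + 2) => v k ((Fin.cons a g : Fin (n + 2) → ℕ) k)) =
          Fin.cons (v 0 a) (fun k => v (k + 1) (g k)) :=
      fun a g => funext fun k => by cases k using Fin.cases <;> simp
    have first_row : ∀ (s : ℕ) (w : Fin (n + 1) → M), w 0 = v 1 s →
        ∑ a ∈ range s, D (Fin.cons (v 0 a) w) = D (Fin.cons (v 1 0) w) := fun s w hw => by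
      have repeated : D (Fin.cons (v 1 s) w) = 0 :=
        D.map_eq_zero_of_eq _ (i := 0) (j := 1) (by simp [hw]) zero_ne_one
      calc ∑ a ∈ range s, D (Fin.cons (v 0 a) w)
          = D (Function.update (Fin.cons (v 1 0) w) 0 (∑ a ∈ range s, v 0 a)) := by
            rw [map_update_sum]
            simp only [Fin.update_cons_zero]
        _ = D (Fin.cons (v 1 0) w) := by
            rw [telescope, map_update_sub, Fin.update_cons_zero, Fin.update_cons_zero, repeated,
              sub_zero]
    rw [sum_increasingTuples_succ_succ]
    simp only [row_cons]
    rw [sum_congr rfl fun g _ => first_row (g 0) _ rfl]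
    refine (ih (fun i => v (i + 1)) (fun i a => hv (i + 1) a) (D.curryLeft (v 1 0))
      (fun i s => telescope (i + 1) s)).trans ?_
    rw [curryLeft_apply_apply, Matrix.vecCons, Fin.cons_update, Fin.succ_last]
    congr 2
    funext k
    cases k using Fin.cases <;> simp

end AlternatingMap

section betheRow

variable {K ι : Type*} [Field K]

def betheRow (μ : ι → K) (i y : ℕ) : ι → K :=
  fun j => (1 - μ j) ^ (-(i : ℤ) - 1) * μ j ^ y

variable {μ : ι → K}

theorem betheRow_eq_sub_succ (hμ : ∀ j, μ j ≠ 1) (i a : ℕ) :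
    betheRow μ i a = betheRow μ (i + 1) a - betheRow μ (i + 1) (a + 1) := by
  funext j
  have hb : 1 - μ j ≠ 0 := sub_ne_zero.2 (hμ j).symm
  simp only [betheRow, Pi.sub_apply, Nat.cast_succ, pow_succ]
  rw [show -(i : ℤ) - 1 = (-((i : ℤ) + 1) - 1) + 1 by ring, zpow_add_one₀ hb]
  ring

theorem betheRow_succ_zero (i : ℕ) :
    betheRow μ (i + 1) 0 = fun j => (1 - μ j) ^ (-(i : ℤ) - 2) := by
  funext j
  simp only [betheRow, pow_zero, mul_one, Nat.cast_succ]
  ring_nf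

theorem betheRow_eq_smul_of_bethe {L N : ℕ} {z : K} (hμ : ∀ j, μ j ≠ 1)
    (hB : ∀ j, (μ j)⁻¹ ^ L * (1 - μ j) ^ N = z ^ L) :
    betheRow μ N L = (z ^ L)⁻¹ • betheRow μ 0 0 := by
  funext j
  have hb : 1 - μ j ≠ 0 := sub_ne_zero.2 (hμ j).symm
  simp only [betheRow, Pi.smul_apply, smul_eq_mul, ← hB j, zpow_sub₀ hb, zpow_neg, zpow_natCast,
    zpow_one, mul_inv, inv_pow, inv_inv, pow_zero, inv_one, one_div, mul_one]
  ring

end betheRow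

section betheDet

variable {K : Type*} [Field K] {n : ℕ} {μ : Fin (n + 1) → K}

theorem det_updateRow_last_betheRow (hμ : ∀ j, μ j ≠ 1) :
    ((Matrix.of fun k : Fin (n + 1) => betheRow μ (k + 1) 0).updateRow (Fin.last n)
      (betheRow μ 0 0)).det =
      (-1) ^ n * (∏ j, (1 - μ j)) * (Matrix.of fun k : Fin (n + 1) => betheRow μ (k + 1) 0).det := by
  set A := Matrix.of fun k : Fin (n + 1) => betheRow μ (k + 1) 0
  have rotate : A.updateRow (Fin.last n) (betheRow μ 0 0) =
      (Matrix.of fun k : Fin (n + 1) => betheRow μ k 0).submatrix (finRotate (n + 1)) id := by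
    ext i j
    by_cases hi : i = Fin.last n
    · simp [hi]
    · simp only [A, Matrix.updateRow_ne hi, Matrix.submatrix_apply, Matrix.of_apply, id,
        coe_finRotate_of_ne_last hi]
  have scale : (Matrix.of fun k : Fin (n + 1) => betheRow μ k 0) =
      A * Matrix.diagonal (fun j => 1 - μ j) := by
    ext i j
    have hb : 1 - μ j ≠ 0 := sub_ne_zero.2 (hμ j).symm
    simp only [A, Matrix.mul_diagonal, Matrix.of_apply, betheRow, pow_zero, mul_one]
    rw [← zpow_add_one₀ hb]
    push_cast
    ring_nf
  rw [rotate, Matrix.det_permute, sign_finRotate, scale, Matrix.det_mul, Matrix.det_diagonal]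
  push_cast
  ring

theorem det_updateRow_last_sub_smul_betheRow (hμ : ∀ j, μ j ≠ 1) (c : K) :
    ((Matrix.of fun k : Fin (n + 1) => betheRow μ (k + 1) 0).updateRow (Fin.last n)
      (betheRow μ (n + 1) 0 - c • betheRow μ 0 0)).det =
      (1 + (-1) ^ (n + 1) * c * ∏ j, (1 - μ j)) *
        (Matrix.of fun k : Fin (n + 1) => betheRow μ (k + 1) 0).det := by
  set A := Matrix.of fun k : Fin (n + 1) => betheRow μ (k + 1) 0
  have last_row : A (Fin.last n) = betheRow μ (n + 1) 0 := rfl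
  rw [sub_eq_add_neg, ← neg_smul, Matrix.det_updateRow_add, Matrix.det_updateRow_smul,
    det_updateRow_last_betheRow hμ, ← last_row, Matrix.updateRow_eq_self]
  ring

end betheDet

theorem sum_config_bethe_det_general (L N : ℕ) (hN : 1 ≤ N)
    (z : ℂ) (lam : Fin N → ℂ)
    (h1 : ∀ i, lam i ≠ 1)
    (hBethe : ∀ i, (lam i) ^ L * (1 - (lam i)⁻¹) ^ N = z ^ L) :
    ∑ x : {f : Fin N → Fin L // StrictMono f},
        Matrix.det (Matrix.of fun i j : Fin N =>
          (1 - (lam j)⁻¹) ^ (-((i : ℕ) : ℤ) - 1) * (lam j) ^ (-((x.1 i : ℕ) : ℤ)))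
      = (1 + (-1 : ℂ) ^ N * z ^ (-(L : ℤ)) * ∏ i, (1 - (lam i)⁻¹)) *
          Matrix.det (Matrix.of fun i j : Fin N =>
            (1 - (lam j)⁻¹) ^ (-((i : ℕ) : ℤ) - 2)) := by
  obtain ⟨n, rfl⟩ : ∃ n, N = n + 1 := ⟨N - 1, by omega⟩
  set μ : Fin (n + 1) → ℂ := fun j => (lam j)⁻¹
  have hμ : ∀ j, μ j ≠ 1 := fun j => inv_ne_one.2 (h1 j)
  have hB : ∀ j, (μ j)⁻¹ ^ L * (1 - μ j) ^ (n + 1) = z ^ L := by simpa [μ] using hBethe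
  have entries : ∀ x : Fin (n + 1) → Fin L, (Matrix.of fun i j : Fin (n + 1) =>
      (1 - (lam j)⁻¹) ^ (-((i : ℕ) : ℤ) - 1) * (lam j) ^ (-((x i : ℕ) : ℤ))) =
      Matrix.of fun k : Fin (n + 1) => betheRow μ k (x k : ℕ) := fun x => by
    ext i j
    simp [betheRow, μ, zpow_neg, inv_pow]
  have reduced : (Matrix.of fun i j : Fin (n + 1) => (1 - (lam j)⁻¹) ^ (-((i : ℕ) : ℤ) - 2)) =
      Matrix.of fun k : Fin (n + 1) => betheRow μ (k + 1) 0 := by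
    ext i j
    simp [betheRow_succ_zero, μ]
  simp only [entries, reduced]
  rw [sum_strictMono_fin_eq_sum_increasingTuples
    (F := fun x : Fin (n + 1) → ℕ => Matrix.det (Matrix.of fun k => betheRow μ k (x k)))]
  calc _ = ((Matrix.of fun k : Fin (n + 1) => betheRow μ (k + 1) 0).updateRow (Fin.last n)
          (betheRow μ (n + 1) 0 - betheRow μ (n + 1) L)).det :=
        AlternatingMap.sum_increasingTuples_of_eq_sub_succ _ (betheRow_eq_sub_succ hμ) n L
          Matrix.detRowAlternating
    _ = _ := by
      rw [betheRow_eq_smul_of_bethe hμ hB, det_updateRow_last_sub_smul_betheRow hμ, zpow_neg,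
        zpow_natCast]

/-- Summation of the Bethe determinant over all configurations
`0 ≤ x_1 < x_2 < ⋯ < x_N ≤ L-1` (encoded as strictly monotone maps `Fin N → Fin L`):
if each `λ_j` satisfies the deformed Bethe equation `λ_j^L (1-λ_j⁻¹)^N = z^L`, then
`∑_X det[(1-λ_j⁻¹)^{-i} λ_j^{-x_i}]
  = (1 + (-1)^N z^{-L} ∏_i (1-λ_i⁻¹)) · det[(1-λ_j⁻¹)^{-i-1}]`. -/
theorem sum_config_bethe_det (L N : ℕ) (hN : 1 ≤ N) (hNL : N ≤ L)
    (z : ℂ) (hz : z ≠ 0) (lam : Fin N → ℂ)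
    (h0 : ∀ i, lam i ≠ 0) (h1 : ∀ i, lam i ≠ 1)
    (hBethe : ∀ i, (lam i) ^ L * (1 - (lam i)⁻¹) ^ N = z ^ L) :
    ∑ x : {f : Fin N → Fin L // StrictMono f},
        Matrix.det (Matrix.of fun i j : Fin N =>
          (1 - (lam j)⁻¹) ^ (-((i : ℕ) : ℤ) - 1) * (lam j) ^ (-((x.1 i : ℕ) : ℤ)))
      = (1 + (-1 : ℂ) ^ N * z ^ (-(L : ℤ)) * ∏ i, (1 - (lam i)⁻¹)) *
          Matrix.det (Matrix.of fun i j : Fin N =>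
            (1 - (lam j)⁻¹) ^ (-((i : ℕ) : ℤ) - 2)) :=
  sum_config_bethe_det_general L N hN z lam h1 hBethe
end

section
/- Let 1 ≤ N ≤ L be integers, z ∈ ℂ*, ζ ∈ ℂ with |ζ| = 1, and let w be a complex number (w ∉ {0,1}) satisfying w^L (1-w^{-1})^N = z^L as part of a solution (z, w_1, …, w_N) to the decoupled Bethe equations with w = w_i. Then |z| ≤ |w| + N/L. -/
/-!
Taking moduli in the Bethe equation gives `|z|^L = |w|^(L-N) (|w| |1 - w⁻¹|)^N`, and
`|w| |1 - w⁻¹| = |w - 1| ≤ |w| + 1`. The weighted AM-GM inequality with weights `1 - N/L` and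
`N/L` then bounds `|w|^(L-N) (|w| + 1)^N` by `(|w| + N/L)^L`.
-/

theorem norm_mul_norm_one_sub_inv_le {K : Type*} [NormedDivisionRing K] (w : K) :
    ‖w‖ * ‖1 - w⁻¹‖ ≤ ‖w‖ + 1 := by
  rcases eq_or_ne w 0 with rfl | hw
  · simp
  calc ‖w‖ * ‖1 - w⁻¹‖ = ‖w - 1‖ := by rw [← norm_mul, mul_sub, mul_one, mul_inv_cancel₀ hw]
    _ ≤ ‖w‖ + 1 := by simpa using norm_sub_le w 1

theorem pow_sub_mul_pow_le_weighted_mean_pow {a c : ℝ} {L N : ℕ} (ha : 0 ≤ a) (hc : 0 ≤ c)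
    (hNL : N ≤ L) :
    a ^ (L - N) * c ^ N ≤ ((1 - N / L) * a + N / L * c) ^ L := by
  rcases Nat.eq_zero_or_pos L with rfl | hL
  · simp [Nat.le_zero.1 hNL]
  have hL' : (L : ℝ) ≠ 0 := by positivity
  have hNL' : (N : ℝ) ≤ L := by exact_mod_cast hNL
  have hamgm := Real.geom_mean_le_arith_mean2_weighted (p₁ := a) (p₂ := c)
    (sub_nonneg.2 (div_le_one_of_le₀ hNL' (Nat.cast_nonneg L))) (by positivity) ha hc
    (sub_add_cancel 1 _)
  calc a ^ (L - N) * c ^ N = (a ^ (1 - (N : ℝ) / L) * c ^ ((N : ℝ) / L)) ^ L := by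
        rw [mul_pow, ← Real.rpow_natCast, ← Real.rpow_natCast, ← Real.rpow_natCast (_ ^ _),
          ← Real.rpow_natCast (c ^ _), ← Real.rpow_mul ha, ← Real.rpow_mul hc, Nat.cast_sub hNL]
        congr 2 <;> field_simp
    _ ≤ ((1 - N / L) * a + N / L * c) ^ L :=
        pow_le_pow_left₀ (by positivity) hamgm L

theorem bethe_root_location_general (L N : ℕ) (hN : 1 ≤ N) (hNL : N ≤ L)
    (z w : ℂ)
    (hq : w ^ L * (1 - w⁻¹) ^ N = z ^ L) :
    ‖z‖ ≤ ‖w‖ + (N : ℝ) / L := by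
  have hL : L ≠ 0 := by omega
  have key : ‖z‖ ^ L ≤ (‖w‖ + N / L) ^ L :=
    calc ‖z‖ ^ L = ‖w‖ ^ (L - N) * (‖w‖ * ‖1 - w⁻¹‖) ^ N := by
          rw [← norm_pow, ← hq, norm_mul, norm_pow, norm_pow, mul_pow, ← mul_assoc, ← pow_add,
            Nat.sub_add_cancel hNL]
      _ ≤ ‖w‖ ^ (L - N) * (‖w‖ + 1) ^ N := by gcongr; exact norm_mul_norm_one_sub_inv_le w
      _ ≤ ((1 - N / L) * ‖w‖ + N / L * (‖w‖ + 1)) ^ L :=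
          pow_sub_mul_pow_le_weighted_mean_pow (norm_nonneg w) (by positivity) hNL
      _ = (‖w‖ + N / L) ^ L := by ring
  exact (pow_le_pow_iff_left₀ (norm_nonneg z) (by positivity) hL).1 key

/-- If `w ∉ {0,1}` satisfies the decoupled Bethe equation
`w^L (1-w⁻¹)^N = z^L` (with `1 ≤ N ≤ L`, `z ≠ 0`), then `|z| ≤ |w| + N/L`. -/
theorem bethe_root_location (L N : ℕ) (hN : 1 ≤ N) (hNL : N ≤ L)
    (z w : ℂ) (hz : z ≠ 0) (h0 : w ≠ 0) (h1 : w ≠ 1)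
    (hq : w ^ L * (1 - w⁻¹) ^ N = z ^ L) :
    ‖z‖ ≤ ‖w‖ + (N : ℝ) / L :=
  bethe_root_location_general L N hN hNL z w hq
end
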